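/- arXiv:1602.03416 — 5 statements merged into one kernel-verified Lean document; each statement's English description precedes it below -/
import Mathlib

section
/- Let α̂ = -1 + sqrt(24α+1), β̂ = -1 + sqrt(24β+1), γ̂ = -1 + sqrt(24γ+1) for α,β,γ ≥ 0. Then the three conditions (i) α,β,γ ≥ 5/8, (ii) α ≤ ξ̃(β,γ), β ≤ ξ̃(α,γ), γ ≤ ξ̃(α,β), and (iii) ξ(α,β,γ) ≥ 2 hold simultaneously if and only if min(α̂, β̂, γ̂) ≥ 3 and α̂ + β̂ + γ̂ ≥ max(10, 2α̂, 2β̂, 2γ̂). -/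
/-!
In the variables `α̂ = -1 + √(24α+1)` the exponents are quadratic:
`ξ̃(β,γ) = ((β̂ + γ̂ + 1)² - 1)/24` and `ξ(α,β,γ) = ((α̂ + β̂ + γ̂)² - 4)/48`, while
`α = ((α̂ + 1)² - 1)/24`. Since `t ↦ (t² - c)/k` is increasing for `t ≥ 0`, each of the
conditions (i)–(iii) becomes a linear inequality between the hats, and the triangle
inequality `α̂ ≤ β̂ + γ̂` is `2α̂ ≤ α̂ + β̂ + γ̂`.
-/

/-- Half-plane Brownian intersection exponent. -/
noncomputable def xit (x y : ℝ) : ℝ :=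
  ((Real.sqrt (24*x+1) + Real.sqrt (24*y+1) - 1)^2 - 1) / 24

/-- Whole-plane Brownian intersection exponent. -/
noncomputable def xi (x y z : ℝ) : ℝ :=
  ((Real.sqrt (24*x+1) + Real.sqrt (24*y+1) + Real.sqrt (24*z+1) - 3)^2 - 4) / 48

/-- α̂ = -1 + sqrt(24α+1). -/
noncomputable def hat (x : ℝ) : ℝ := -1 + Real.sqrt (24*x+1)

lemma sqrt_eq_hat_add_one (x : ℝ) : Real.sqrt (24*x+1) = hat x + 1 := by
  rw [hat]
  ring

lemma hat_nonneg {x : ℝ} (hx : 0 ≤ x) : 0 ≤ hat x := by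
  have : 1 ≤ Real.sqrt (24*x+1) := Real.one_le_sqrt.mpr (by linarith)
  unfold hat
  linarith

lemma xit_eq_hat (y z : ℝ) : xit y z = ((hat y + hat z + 1)^2 - 1) / 24 := by
  simp only [xit, sqrt_eq_hat_add_one]
  ring

lemma xi_eq_hat (x y z : ℝ) : xi x y z = ((hat x + hat y + hat z)^2 - 4) / 48 := by
  simp only [xi, sqrt_eq_hat_add_one]
  ring

lemma five_eighths_le_iff_three_le_hat (x : ℝ) : 5/8 ≤ x ↔ 3 ≤ hat x := by
  rw [hat, ← sub_le_iff_le_add', Real.le_sqrt' (by norm_num)]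
  constructor <;> intro h <;> linarith

lemma le_xit_iff_hat_le_add {x y z : ℝ} (hy : 0 ≤ y) (hz : 0 ≤ z) :
    x ≤ xit y z ↔ hat x ≤ hat y + hat z := by
  have hs : 0 ≤ hat y + hat z + 1 := by linarith [hat_nonneg hy, hat_nonneg hz]
  calc x ≤ xit y z ↔ 24*x + 1 ≤ (hat y + hat z + 1)^2 := by
        rw [xit_eq_hat]; constructor <;> intro h <;> linarith
    _ ↔ Real.sqrt (24*x+1) ≤ hat y + hat z + 1 := (Real.sqrt_le_left hs).symm
    _ ↔ hat x ≤ hat y + hat z := by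
        rw [sqrt_eq_hat_add_one, add_le_add_iff_right]

lemma two_le_xi_iff_ten_le_hat_add {x y z : ℝ} (hx : 0 ≤ x) (hy : 0 ≤ y) (hz : 0 ≤ z) :
    2 ≤ xi x y z ↔ 10 ≤ hat x + hat y + hat z := by
  have hs : 0 ≤ hat x + hat y + hat z := by
    linarith [hat_nonneg hx, hat_nonneg hy, hat_nonneg hz]
  calc 2 ≤ xi x y z ↔ 10^2 ≤ (hat x + hat y + hat z)^2 := by
        rw [xi_eq_hat]; constructor <;> intro h <;> linarith
    _ ↔ 10 ≤ hat x + hat y + hat z := pow_le_pow_iff_left₀ (by norm_num) hs two_ne_zero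

theorem trichordal_conditions_iff_hat_general (α β γ : ℝ) :
    ((5/8 ≤ α ∧ 5/8 ≤ β ∧ 5/8 ≤ γ) ∧
     (α ≤ xit β γ ∧ β ≤ xit α γ ∧ γ ≤ xit α β) ∧
     2 ≤ xi α β γ) ↔
    (3 ≤ min (hat α) (min (hat β) (hat γ)) ∧
     max 10 (max (2 * hat α) (max (2 * hat β) (2 * hat γ)))
       ≤ hat α + hat β + hat γ) := by
  simp only [le_min_iff, max_le_iff, ← five_eighths_le_iff_three_le_hat]
  refine and_congr_right fun ⟨hα, hβ, hγ⟩ => ?_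
  have hα₀ : 0 ≤ α := by linarith
  have hβ₀ : 0 ≤ β := by linarith
  have hγ₀ : 0 ≤ γ := by linarith
  rw [le_xit_iff_hat_le_add hβ₀ hγ₀, le_xit_iff_hat_le_add hα₀ hγ₀,
    le_xit_iff_hat_le_add hα₀ hβ₀, two_le_xi_iff_ten_le_hat_add hα₀ hβ₀ hγ₀]
  grind

theorem trichordal_conditions_iff_hat (α β γ : ℝ)
    (hα : 0 ≤ α) (hβ : 0 ≤ β) (hγ : 0 ≤ γ) :
    ((5/8 ≤ α ∧ 5/8 ≤ β ∧ 5/8 ≤ γ) ∧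
     (α ≤ xit β γ ∧ β ≤ xit α γ ∧ γ ≤ xit α β) ∧
     2 ≤ xi α β γ) ↔
    (3 ≤ min (hat α) (min (hat β) (hat γ)) ∧
     max 10 (max (2 * hat α) (max (2 * hat β) (2 * hat γ)))
       ≤ hat α + hat β + hat γ) :=
  trichordal_conditions_iff_hat_general α β γ
end

section
/- Fix x ∈ ℝ \ {-1, 0}. The solution of the linear ODE y'(t) = -a_x(t)·y(t)/(v(t) - b_x(t))² with y(0) = 1, where a_x(t) = exp(-2t/(x²+x)), b_x(t) = (2x+1)exp(-t/(x²+x)) - x - 1, and v(t) = x·exp(-t/(x²+x)) - x - 1, is y(t) = exp(-t/(x+1)²). -/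
/-!
Along the flow, `v(t) - b_x(t) = -(x+1) e^{-t/(x²+x)}` while `a_x(t) = e^{-2t/(x²+x)}`, so the
coefficient `a_x / (v - b_x)²` is the constant `1/(x+1)²` and the equation is `y' = -y/(x+1)²`.
Its solution with `y(0) = 1` is found with the integrating factor `e^{t/(x+1)²}`.
-/

open Real Set

theorem eq_mul_exp_of_hasDerivAt_mul_self {y : ℝ → ℝ} {k : ℝ}
    (hy : ∀ t, 0 ≤ t → HasDerivAt y (k * y t) t) (t : ℝ) (ht : 0 ≤ t) :
    y t = y 0 * exp (k * t) := by
  set g : ℝ → ℝ := fun s => y s * exp (-(k * s))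
  have hg : ∀ s, 0 ≤ s → HasDerivAt g 0 s := by
    intro s hs
    have hexp : HasDerivAt (fun s => exp (-(k * s))) (exp (-(k * s)) * -(k * 1)) s :=
      (((hasDerivAt_id s).const_mul k).neg).exp
    have hprod := (hy s hs).mul hexp
    rwa [show k * y s * exp (-(k * s)) + y s * (exp (-(k * s)) * -(k * 1)) = 0 by ring] at hprod
  have hconst : g t = g 0 :=
    constant_of_has_deriv_right_zero
      (fun s hs => (hg s hs.1).continuousAt.continuousWithinAt)
      (fun s hs => (hg s hs.1).hasDerivWithinAt) t ⟨ht, le_rfl⟩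
  have hg0 : g 0 = y 0 := by simp [g]
  calc y t = g t * exp (k * t) := by simp [g, mul_assoc, ← exp_add]
    _ = y 0 * exp (k * t) := by rw [hconst, hg0]

theorem loewner_coeff_eq_const (x t Y : ℝ) (hx : x + 1 ≠ 0) :
    -(exp (-2*t/(x^2+x))) * Y /
        ((x * exp (-t/(x^2+x)) - x - 1) - ((2*x+1) * exp (-t/(x^2+x)) - x - 1))^2 =
      -((x+1)^2)⁻¹ * Y := by
  set E := exp (-t/(x^2+x))
  have hE : E ≠ 0 := exp_ne_zero _
  have hexp2 : exp (-2*t/(x^2+x)) = E ^ 2 := by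
    rw [← exp_nat_mul]; congr 1; ring
  have hdiff : (x * E - x - 1) - ((2*x+1) * E - x - 1) = -((x+1) * E) := by ring
  rw [hexp2, hdiff]
  field_simp

theorem loewner_derivative_ode_solution_general (x : ℝ) (hx1 : x ≠ -1)
    (y : ℝ → ℝ) (h0 : y 0 = 1)
    (hy : ∀ t : ℝ, 0 ≤ t →
      HasDerivAt y
        (-(Real.exp (-2*t/(x^2+x))) * y t /
          ((x * Real.exp (-t/(x^2+x)) - x - 1)
            - ((2*x+1) * Real.exp (-t/(x^2+x)) - x - 1))^2) t) :
    ∀ t : ℝ, 0 ≤ t → y t = Real.exp (-t/(x+1)^2) := by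
  have hx : x + 1 ≠ 0 := fun h => hx1 (by linarith)
  have hode : ∀ t, 0 ≤ t → HasDerivAt y (-((x+1)^2)⁻¹ * y t) t := fun t ht => by
    simpa only [loewner_coeff_eq_const x t (y t) hx] using hy t ht
  intro t ht
  rw [eq_mul_exp_of_hasDerivAt_mul_self hode t ht, h0, one_mul]
  congr 1
  ring

theorem loewner_derivative_ode_solution (x : ℝ) (hx1 : x ≠ -1) (hx0 : x ≠ 0)
    (y : ℝ → ℝ) (h0 : y 0 = 1)
    (hy : ∀ t : ℝ, 0 ≤ t →
      HasDerivAt y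
        (-(Real.exp (-2*t/(x^2+x))) * y t /
          ((x * Real.exp (-t/(x^2+x)) - x - 1)
            - ((2*x+1) * Real.exp (-t/(x^2+x)) - x - 1))^2) t) :
    ∀ t : ℝ, 0 ≤ t → y t = Real.exp (-t/(x+1)^2) :=
  loewner_derivative_ode_solution_general x hx1 y h0 hy
end

section
/- Let a, b', c be reals with a ≥ b' > 0 and c > 0, and let u : [0,1) → ℝ be a C² solution of Euler's hypergeometric equation z(1-z)u''(z) + (c - (a + b' + 1)z)u'(z) - a·b'·u(z) = 0 with u(0) = 1 and u'(0) = a·b'/c. Then u is strictly increasing on (0,1); in particular u(z) > 0 for all z ∈ [0,1). -/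
/-!
It suffices that `u' > 0` on `[0, 1)`. Otherwise let `z₀ > 0` be the first zero of `u'`. Then `u`
increases on `[0, z₀]`, so `u(z₀) > 0` and the equation at `z₀` reads
`z₀ (1 - z₀) u''(z₀) = a b u(z₀) > 0`. But `u'` is positive on `[0, z₀)` and vanishes at `z₀`, so it
attains its minimum over `[0, z₀]` at `z₀`, which forces `u''(z₀) ≤ 0`.
-/

open Set

lemma exists_first_zero_of_continuousOn {f : ℝ → ℝ} {a x : ℝ} (hax : a ≤ x)
    (hf : ContinuousOn f (Icc a x)) (ha : 0 < f a) (hx : f x ≤ 0) :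
    ∃ z ∈ Ioc a x, f z = 0 ∧ ∀ y ∈ Ico a z, 0 < f y := by
  set T := Icc a x ∩ f ⁻¹' Iic 0
  have hT : IsClosed T := hf.preimage_isClosed_of_isClosed isClosed_Icc isClosed_Iic
  have hxT : x ∈ T := ⟨⟨hax, le_rfl⟩, hx⟩
  obtain ⟨⟨haz, hzx⟩, hz⟩ : sInf T ∈ T := hT.csInf_mem ⟨x, hxT⟩ ⟨a, fun y hy => hy.1.1⟩
  have hbefore : ∀ y ∈ Ico a (sInf T), 0 < f y := fun y hy =>
    not_le.mp fun hy' => notMem_of_lt_csInf hy.2 ⟨a, fun w hw => hw.1.1⟩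
      ⟨⟨hy.1, hy.2.le.trans hzx⟩, hy'⟩
  have haz' : a < sInf T := haz.lt_of_ne fun h => (ha.trans_le (h ▸ hz)).false
  obtain ⟨w, hw, hfw⟩ :=
    intermediate_value_Icc' haz (hf.mono (Icc_subset_Icc_right hzx)) ⟨hz, ha.le⟩
  have hwz : w = sInf T :=
    hw.2.eq_of_not_lt fun hlt => (hbefore w ⟨hw.1, hlt⟩).ne' hfw
  exact ⟨sInf T, ⟨haz', hzx⟩, hwz ▸ hfw, hbefore⟩

lemma HasDerivWithinAt.nonpos_of_isLocalMinOn_Icc {f : ℝ → ℝ} {a x d : ℝ} (hax : a < x)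
    (hmin : IsLocalMinOn f (Icc a x) x) (hf : HasDerivWithinAt f d (Icc a x) x) : d ≤ 0 := by
  have hcone : a - x ∈ posTangentConeAt (Icc a x) x :=
    sub_mem_posTangentConeAt_of_segment_subset
      ((segment_symm ℝ x a).subset.trans (segment_subset_Icc hax.le))
  have := hmin.hasFDerivWithinAt_nonneg hf.hasFDerivWithinAt hcone
  simp only [ContinuousLinearMap.toSpanSingleton_apply, smul_eq_mul] at this
  nlinarith

lemma strictMonoOn_of_hasDerivWithinAt_pos_of_subset {s D : Set ℝ} {f f' : ℝ → ℝ}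
    (hf : ∀ x ∈ s, HasDerivWithinAt f (f' x) s x) (hDs : D ⊆ s) (hD : Convex ℝ D)
    (hpos : ∀ x ∈ interior D, 0 < f' x) : StrictMonoOn f D :=
  strictMonoOn_of_hasDerivWithinAt_pos hD
    (fun x hx => (hf x (hDs hx)).continuousWithinAt.mono hDs)
    (fun x hx => (hf x (hDs (interior_subset hx))).mono (interior_subset.trans hDs)) hpos

theorem euler_hypergeometric_deriv_pos_s11 {a b c : ℝ} (hab : 0 < a * b) {u u' u'' : ℝ → ℝ}
    (hu : ∀ z ∈ Ico (0:ℝ) 1, HasDerivWithinAt u (u' z) (Ico 0 1) z)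
    (hu' : ∀ z ∈ Ico (0:ℝ) 1, HasDerivWithinAt u' (u'' z) (Ico 0 1) z)
    (hode : ∀ z ∈ Ico (0:ℝ) 1, z*(1-z)*u'' z + (c - (a+b+1)*z)*u' z - a*b*u z = 0)
    (h0 : 0 ≤ u 0) (h0' : 0 < u' 0) :
    ∀ z ∈ Ico (0:ℝ) 1, 0 < u' z := by
  intro t ht
  by_contra! htneg
  have hsub : Icc 0 t ⊆ Ico 0 1 := Icc_subset_Ico_right ht.2
  obtain ⟨z₀, ⟨hz₀, hz₀t⟩, hzero, hbefore⟩ := exists_first_zero_of_continuousOn ht.1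
    (fun x hx => (hu' x (hsub hx)).continuousWithinAt.mono hsub) h0' htneg
  have hsub₀ : Icc 0 z₀ ⊆ Ico 0 1 := (Icc_subset_Icc_right hz₀t).trans hsub
  have hz₀_mem : z₀ ∈ Ico (0:ℝ) 1 := hsub₀ (right_mem_Icc.2 hz₀.le)
  have hmono : StrictMonoOn u (Icc 0 z₀) :=
    strictMonoOn_of_hasDerivWithinAt_pos_of_subset hu hsub₀ (convex_Icc 0 z₀)
      fun x hx => hbefore x (Ioo_subset_Ico_self (by rwa [interior_Icc] at hx))
  have hu_pos : 0 < u z₀ :=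
    h0.trans_lt (hmono (left_mem_Icc.2 hz₀.le) (right_mem_Icc.2 hz₀.le) hz₀)
  have hmin : IsLocalMinOn u' (Icc 0 z₀) z₀ :=
    IsMinOn.localize <| isMinOn_iff.2 fun y hy => by
      rcases hy.2.lt_or_eq with hlt | rfl
      · exact hzero ▸ (hbefore y ⟨hy.1, hlt⟩).le
      · exact le_rfl
  have hu''_nonpos : u'' z₀ ≤ 0 :=
    ((hu' z₀ hz₀_mem).mono hsub₀).nonpos_of_isLocalMinOn_Icc hz₀ hmin
  have hode₀ := hode z₀ hz₀_mem
  rw [hzero] at hode₀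
  have hz₀_one : 0 < 1 - z₀ := sub_pos.2 hz₀_mem.2
  nlinarith [mul_pos hab hu_pos, mul_pos hz₀ hz₀_one]

theorem euler_hypergeometric_strictMono_general (a b c : ℝ)
    (hab : b ≤ a) (hb : 0 < b) (hc : 0 < c)
    (u u' u'' : ℝ → ℝ)
    (hu : ∀ z ∈ Set.Ico (0:ℝ) 1, HasDerivWithinAt u (u' z) (Set.Ico 0 1) z)
    (hu' : ∀ z ∈ Set.Ico (0:ℝ) 1, HasDerivWithinAt u' (u'' z) (Set.Ico 0 1) z)
    (hode : ∀ z ∈ Set.Ico (0:ℝ) 1,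
      z*(1-z)*u'' z + (c - (a+b+1)*z)*u' z - a*b*u z = 0)
    (h0 : u 0 = 1) (h0' : u' 0 = a*b/c) :
    StrictMonoOn u (Set.Ioo 0 1) ∧ ∀ z ∈ Set.Ico (0:ℝ) 1, 0 < u z := by
  have hab_pos : 0 < a * b := mul_pos (hb.trans_le hab) hb
  have hderiv_pos : ∀ z ∈ Ico (0:ℝ) 1, 0 < u' z :=
    euler_hypergeometric_deriv_pos_s11 hab_pos hu hu' hode (h0 ▸ zero_le_one)
      (h0' ▸ div_pos hab_pos hc)
  have hmono : StrictMonoOn u (Ico 0 1) :=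
    strictMonoOn_of_hasDerivWithinAt_pos_of_subset hu subset_rfl (convex_Ico 0 1)
      fun z hz => hderiv_pos z (interior_subset hz)
  refine ⟨hmono.mono Ioo_subset_Ico_self, fun z hz => ?_⟩
  rcases hz.1.eq_or_lt with rfl | hz₀
  · exact h0 ▸ one_pos
  · have h1 := hmono (left_mem_Ico.2 one_pos) hz hz₀
    rw [h0] at h1
    exact one_pos.trans h1

theorem euler_hypergeometric_strictMono (a b c : ℝ)
    (hab : b ≤ a) (hb : 0 < b) (hc : 0 < c)
    (u u' u'' : ℝ → ℝ)
    (hu : ∀ z ∈ Set.Ico (0:ℝ) 1, HasDerivWithinAt u (u' z) (Set.Ico 0 1) z)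
    (hu' : ∀ z ∈ Set.Ico (0:ℝ) 1, HasDerivWithinAt u' (u'' z) (Set.Ico 0 1) z)
    (hu'' : ContinuousOn u'' (Set.Ico 0 1))
    (hode : ∀ z ∈ Set.Ico (0:ℝ) 1,
      z*(1-z)*u'' z + (c - (a+b+1)*z)*u' z - a*b*u z = 0)
    (h0 : u 0 = 1) (h0' : u' 0 = a*b/c) :
    StrictMonoOn u (Set.Ioo 0 1) ∧ ∀ z ∈ Set.Ico (0:ℝ) 1, 0 < u z :=
  euler_hypergeometric_strictMono_general a b c hab hb hc u u' u'' hu hu' hode h0 h0'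
end

section
/- Let a, b, c ∈ ℝ with a > 0, b > 0, c > 0, and let w : (-∞, 0] → ℝ be a C² solution of z(1-z)w''(z) + (c - (a+b+1)z)w'(z) - ab·w(z) = 0 with w(0) = 1 and w(z) > 0 for all z ≤ 0. Then w'(z) > 0 for all z < 0. -/
/-!
Suppose `w'` is somewhere nonpositive on `(-∞, 0)`. Since `w'(0) = ab/c > 0` by the equation at
`z = 0`, there is a last point `z₀ < 0` with `w'(z₀) ≤ 0`; as `w' > 0` to its right, `w''(z₀) ≥ 0`.
At `z₀` the three terms `z₀(1-z₀)w''`, `(c-(a+b+1)z₀)w'` and `-ab·w` of the equation are then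
`≤ 0`, `≤ 0` and `< 0`, so they cannot sum to zero.
-/

open Set Filter Topology

theorem ContinuousOn.exists_last_nonpos {α β : Type*} [ConditionallyCompleteLinearOrder α]
    [TopologicalSpace α] [OrderTopology α] [LinearOrder β] [Zero β] [TopologicalSpace β]
    [ClosedIicTopology β] {f : α → β} {a b : α} (hab : a ≤ b) (hf : ContinuousOn f (Icc a b))
    (ha : f a ≤ 0) (hb : 0 < f b) :
    ∃ c ∈ Ico a b, f c ≤ 0 ∧ ∀ x ∈ Ioc c b, 0 < f x := by
  set S := Icc a b ∩ f ⁻¹' Iic 0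
  have hS : IsCompact S :=
    isCompact_Icc.of_isClosed_subset (hf.preimage_isClosed_of_isClosed isClosed_Icc isClosed_Iic)
      inter_subset_left
  have hSne : S.Nonempty := ⟨a, ⟨left_mem_Icc.mpr hab, ha⟩⟩
  obtain ⟨⟨hac, hcb⟩, hfc⟩ := hS.sSup_mem hSne
  refine ⟨sSup S, ⟨hac, hcb.lt_of_ne fun h => hfc.not_gt (h ▸ hb)⟩, hfc, fun x hx => ?_⟩
  by_contra! hfx
  exact hx.1.not_ge (le_csSup hS.bddAbove ⟨⟨hac.trans hx.1.le, hx.2⟩, hfx⟩)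

theorem HasDerivWithinAt.nonneg_of_forall_Ioc_le {f : ℝ → ℝ} {f' a b : ℝ} {s : Set ℝ}
    (hf : HasDerivWithinAt f f' s a) (hs : Ioc a b ⊆ s) (hab : a < b)
    (hle : ∀ x ∈ Ioc a b, f a ≤ f x) : 0 ≤ f' := by
  have hslope : Tendsto (slope f a) (𝓝[Ioc a b] a) (𝓝 f') :=
    (hasDerivWithinAt_iff_tendsto_slope' left_notMem_Ioc).mp (hf.mono hs)
  have : (𝓝[Ioc a b] a).NeBot := left_nhdsWithin_Ioc_neBot hab
  refine ge_of_tendsto hslope ?_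
  filter_upwards [self_mem_nhdsWithin] with x hx
  exact (slope_nonneg_iff_of_le hx.1.le).mpr (hle x hx)

theorem euler_hypergeometric_deriv_pos_general (a b c : ℝ)
    (ha : 0 < a) (hb : 0 < b) (hc : 0 < c)
    (w w' w'' : ℝ → ℝ)
    (hw' : ∀ z ∈ Set.Iic (0:ℝ), HasDerivWithinAt w' (w'' z) (Set.Iic 0) z)
    (hode : ∀ z ∈ Set.Iic (0:ℝ),
      z*(1-z)*w'' z + (c - (a+b+1)*z)*w' z - a*b*w z = 0)
    (h0 : w 0 = 1) (hpos : ∀ z ∈ Set.Iic (0:ℝ), 0 < w z) :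
    ∀ z < (0:ℝ), 0 < w' z := by
  intro z hz
  by_contra! hz'
  have hw'0 : c * w' 0 = a * b := by simpa [h0, sub_eq_zero] using hode 0 self_mem_Iic
  have hw'0_pos : 0 < w' 0 := pos_of_mul_pos_right (hw'0 ▸ mul_pos ha hb) hc.le
  have hcont : ContinuousOn w' (Icc z 0) := fun x hx =>
    (hw' x hx.2).continuousWithinAt.mono Icc_subset_Iic_self
  obtain ⟨z₀, ⟨-, hz₀⟩, hw'z₀, hright⟩ := hcont.exists_last_nonpos hz.le hz' hw'0_pos
  have hw''z₀ : 0 ≤ w'' z₀ :=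
    (hw' z₀ hz₀.le).nonneg_of_forall_Ioc_le Ioc_subset_Iic_self hz₀
      fun x hx => hw'z₀.trans (hright x hx).le
  have hode₀ := hode z₀ hz₀.le
  nlinarith [mul_nonneg hw''z₀ (by linarith : (0:ℝ) ≤ 1 - z₀),
    mul_pos (mul_pos ha hb) (hpos z₀ hz₀.le),
    mul_nonpos_of_nonneg_of_nonpos (by nlinarith : 0 ≤ c - (a+b+1)*z₀) hw'z₀]

theorem euler_hypergeometric_deriv_pos (a b c : ℝ)
    (ha : 0 < a) (hb : 0 < b) (hc : 0 < c)
    (w w' w'' : ℝ → ℝ)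
    (hw : ∀ z ∈ Set.Iic (0:ℝ), HasDerivWithinAt w (w' z) (Set.Iic 0) z)
    (hw' : ∀ z ∈ Set.Iic (0:ℝ), HasDerivWithinAt w' (w'' z) (Set.Iic 0) z)
    (hw'' : ContinuousOn w'' (Set.Iic 0))
    (hode : ∀ z ∈ Set.Iic (0:ℝ),
      z*(1-z)*w'' z + (c - (a+b+1)*z)*w' z - a*b*w z = 0)
    (h0 : w 0 = 1) (hpos : ∀ z ∈ Set.Iic (0:ℝ), 0 < w z) :
    ∀ z < (0:ℝ), 0 < w' z :=
  euler_hypergeometric_deriv_pos_general a b c ha hb hc w w' w'' hw' hode h0 hpos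
end

section
/- Let μ, ν ∈ ℝ and let w be a C² function on a neighborhood of (-∞, 0] with w(0) = 1, and define G(z) = z^ν (1+z)^μ w(-z) for z > 0. If w satisfies Euler's hypergeometric equation z(1-z)w''+(c-(a+b+1)z)w'-ab·w = 0 with a = λ+μ+ν+2, b = μ+ν-λ, c = 2ν+3/2, then G satisfies (4/3)·G''(z)·z(z+1) + 2G'(z)(2z+1) - G(z)·(2m·z/(z+1) + 2n·(z+1)/z + 2(l+λ-m-n)) = 0 for all z > 0, where l = λ(2λ+1)/3, m = μ(2μ+1)/3, n = ν(2ν+1)/3. -/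
/-!
Write `G = P · W` with `P y = y ^ ν * (1 + y) ^ μ` and `W y = w (-y)`. On `y > 0` the prefactor has
logarithmic derivative `L = ν / y + μ / (1 + y)`, so `P' = P L` and `P'' = P (L² + L')`. Expanding
`G'' = P'' W + 2 P' W' + P W''` and `G' = P' W + P W'`, the left side of the equation at `z` becomes
`-(4/3) P(z)` times the hypergeometric equation for `w` at `-z`.
-/

open Filter Topology Set

theorem deriv_deriv_mul_of_hasDerivAt {𝕜 : Type*} [NontriviallyNormedField 𝕜]
    {f f' f'' g g' g'' : 𝕜 → 𝕜} {s : Set 𝕜} (hs : IsOpen s)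
    (hf : ∀ y ∈ s, HasDerivAt f (f' y) y) (hf' : ∀ y ∈ s, HasDerivAt f' (f'' y) y)
    (hg : ∀ y ∈ s, HasDerivAt g (g' y) y) (hg' : ∀ y ∈ s, HasDerivAt g' (g'' y) y)
    {z : 𝕜} (hz : z ∈ s) :
    deriv (deriv fun y => f y * g y) z = f'' z * g z + 2 * (f' z * g' z) + f z * g'' z := by
  have hfirst : deriv (fun y => f y * g y) =ᶠ[𝓝 z] fun y => f' y * g y + f y * g' y :=
    eventually_of_mem (hs.mem_nhds hz) fun y hy => ((hf y hy).mul (hg y hy)).deriv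
  have hsecond : HasDerivAt (fun y => f' y * g y + f y * g' y)
      (f'' z * g z + f' z * g' z + (f' z * g' z + f z * g'' z)) z :=
    ((hf' z hz).mul (hg z hz)).add ((hf z hz).mul (hg' z hz))
  rw [hfirst.deriv_eq, hsecond.deriv]
  ring

theorem HasDerivAt.comp_neg {𝕜 : Type*} [NontriviallyNormedField 𝕜] {f : 𝕜 → 𝕜} {c y : 𝕜}
    (h : HasDerivAt f c (-y)) :
    HasDerivAt (fun x => f (-x)) (-c) y := by
  simpa [Function.comp_def] using h.comp y (hasDerivAt_neg y)

section Prefactor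

variable (ν μ : ℝ) {y : ℝ}

theorem hasDerivAt_rpow_mul_one_add_rpow (hy : 0 < y) :
    HasDerivAt (fun x => x ^ ν * (1 + x) ^ μ)
      (y ^ ν * (1 + y) ^ μ * (ν / y + μ / (1 + y))) y := by
  have hy1 : 0 < 1 + y := by linarith
  refine ((Real.hasDerivAt_rpow_const (Or.inl hy.ne')).mul
    (((hasDerivAt_id y).const_add 1).rpow_const (Or.inl hy1.ne'))).congr_deriv ?_
  simp only [id]
  rw [Real.rpow_sub_one hy.ne', Real.rpow_sub_one hy1.ne']
  field_simp

theorem hasDerivAt_div_add_div_one_add (hy : 0 < y) :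
    HasDerivAt (fun x => ν / x + μ / (1 + x)) (-(ν / y ^ 2) - μ / (1 + y) ^ 2) y := by
  have hy1 : 1 + y ≠ 0 := by positivity
  refine (((hasDerivAt_const y ν).div (hasDerivAt_id y) hy.ne').add
    ((hasDerivAt_const y μ).div ((hasDerivAt_id y).const_add 1) hy1)).congr_deriv ?_
  simp only [id]
  ring

theorem hasDerivAt_rpow_mul_one_add_rpow_mul (hy : 0 < y) :
    HasDerivAt (fun x => x ^ ν * (1 + x) ^ μ * (ν / x + μ / (1 + x)))
      (y ^ ν * (1 + y) ^ μ * ((ν / y + μ / (1 + y)) ^ 2 - ν / y ^ 2 - μ / (1 + y) ^ 2)) y :=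
  ((hasDerivAt_rpow_mul_one_add_rpow ν μ hy).mul
    (hasDerivAt_div_add_div_one_add ν μ hy)).congr_deriv (by ring)

end Prefactor

theorem G_satisfies_Gdiff_general (lam mu nu : ℝ)
    (w w' w'' : ℝ → ℝ)
    (hw : ∀ z : ℝ, z ≤ 0 → HasDerivAt w (w' z) z)
    (hw' : ∀ z : ℝ, z ≤ 0 → HasDerivAt w' (w'' z) z)
    (hode : ∀ z : ℝ, z ≤ 0 →
      z*(1-z)*w'' z
        + ((2*nu+3/2) - ((lam+mu+nu+2) + (mu+nu-lam) + 1)*z)*w' z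
        - (lam+mu+nu+2)*(mu+nu-lam)*w z = 0) :
    ∀ z : ℝ, 0 < z →
      (4/3) * deriv (deriv (fun y : ℝ => y ^ nu * (1+y) ^ mu * w (-y))) z * (z*(z+1))
        + 2 * deriv (fun y : ℝ => y ^ nu * (1+y) ^ mu * w (-y)) z * (2*z+1)
        - (z ^ nu * (1+z) ^ mu * w (-z)) *
            (2*(mu*(2*mu+1)/3)*z/(z+1) + 2*(nu*(2*nu+1)/3)*(z+1)/z
              + 2*((lam*(2*lam+1)/3) + lam - (mu*(2*mu+1)/3) - (nu*(2*nu+1)/3))) = 0 := by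
  intro z hz
  have hW : ∀ y ∈ Ioi (0 : ℝ), HasDerivAt (fun x => w (-x)) (-w' (-y)) y :=
    fun y hy => (hw (-y) (neg_nonpos.2 (le_of_lt hy))).comp_neg
  have hW' : ∀ y ∈ Ioi (0 : ℝ), HasDerivAt (fun x => -w' (-x)) (w'' (-y)) y :=
    fun y hy => (hw' (-y) (neg_nonpos.2 (le_of_lt hy))).comp_neg.neg.congr_deriv (neg_neg _)
  have hG : HasDerivAt (fun y => y ^ nu * (1 + y) ^ mu * w (-y))
      (z ^ nu * (1 + z) ^ mu * (nu / z + mu / (1 + z)) * w (-z)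
        + z ^ nu * (1 + z) ^ mu * -w' (-z)) z :=
    (hasDerivAt_rpow_mul_one_add_rpow nu mu hz).mul (hW z hz)
  rw [deriv_deriv_mul_of_hasDerivAt isOpen_Ioi
      (fun y hy => hasDerivAt_rpow_mul_one_add_rpow nu mu hy)
      (fun y hy => hasDerivAt_rpow_mul_one_add_rpow_mul nu mu hy) hW hW' hz, hG.deriv]
  have hode_neg := hode (-z) (neg_nonpos.2 hz.le)
  linear_combination (norm := skip) (-(4/3) * z ^ nu * (1+z) ^ mu) * hode_neg
  field_simp
  ring

theorem G_satisfies_Gdiff (lam mu nu : ℝ)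
    (w w' w'' : ℝ → ℝ)
    (hw : ∀ z : ℝ, z ≤ 0 → HasDerivAt w (w' z) z)
    (hw' : ∀ z : ℝ, z ≤ 0 → HasDerivAt w' (w'' z) z)
    (h0 : w 0 = 1)
    (hode : ∀ z : ℝ, z ≤ 0 →
      z*(1-z)*w'' z
        + ((2*nu+3/2) - ((lam+mu+nu+2) + (mu+nu-lam) + 1)*z)*w' z
        - (lam+mu+nu+2)*(mu+nu-lam)*w z = 0) :
    ∀ z : ℝ, 0 < z →
      (4/3) * deriv (deriv (fun y : ℝ => y ^ nu * (1+y) ^ mu * w (-y))) z * (z*(z+1))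
        + 2 * deriv (fun y : ℝ => y ^ nu * (1+y) ^ mu * w (-y)) z * (2*z+1)
        - (z ^ nu * (1+z) ^ mu * w (-z)) *
            (2*(mu*(2*mu+1)/3)*z/(z+1) + 2*(nu*(2*nu+1)/3)*(z+1)/z
              + 2*((lam*(2*lam+1)/3) + lam - (mu*(2*mu+1)/3) - (nu*(2*nu+1)/3))) = 0 :=
  G_satisfies_Gdiff_general lam mu nu w w' w'' hw hw' hode
end
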